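/- arXiv:2308.07278 — 6 statements merged into one kernel-verified Lean document; each statement's English description precedes it below -/
import Mathlib

section
/- For every odd b ≥ 3 there exists a 2×b nearly magic rectangle: a 2×b array containing each of 1,…,2b exactly once, with all column sums equal, and with the two row sums differing by exactly 1. -/
open Finset

/-!
Column `k < b` holds the pair `b - k`, `b + k + 1`: these pairs partition `1, …, 2b`, every
column sums to `2b + 1`, and the two entries differ by `2k + 1`. So choosing which entry goes on
top amounts to choosing signs for the odd numbers `1, 3, …, 2b - 1`, and the top row exceeds the
bottom one by the signed sum. For odd `b` the signs can be chosen to make that sum `1`: from a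
choice for `b`, flip all signs and append `-(2b + 1) + (2b + 3)`.
-/

theorem exists_signs_sum_odd_eq_one (m : ℕ) :
    ∃ σ : ℕ → Bool, ∑ k ∈ range (2 * m + 1), (if σ k then 1 else -1 : ℤ) * (2 * k + 1) = 1 := by
  induction m with
  | zero => exact ⟨fun _ => true, by simp⟩
  | succ m ih =>
    obtain ⟨σ, hσ⟩ := ih
    refine ⟨fun k => if k < 2 * m + 1 then !σ k else k = 2 * m + 2, ?_⟩
    have hflip : ∑ k ∈ range (2 * m + 1),
        (if (if k < 2 * m + 1 then !σ k else k = 2 * m + 2) then 1 else -1 : ℤ) * (2 * k + 1)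
          = -∑ k ∈ range (2 * m + 1), (if σ k then 1 else -1 : ℤ) * (2 * k + 1) := by
      rw [← sum_neg_distrib]
      refine sum_congr rfl fun k hk => ?_
      rw [if_pos (mem_range.mp hk)]
      cases σ k <;> simp
    rw [show 2 * (m + 1) + 1 = 2 * m + 1 + 1 + 1 by ring, sum_range_succ, sum_range_succ, hflip, hσ]
    norm_num
    ring

section PairRectangle

variable (b : ℕ) (σ : ℕ → Bool)

def pairRectangle : Fin 2 → Fin b → ℕ :=
  ![fun j => if σ j then b + j + 1 else b - j, fun j => if σ j then b - j else b + j + 1]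

@[simp]
theorem pairRectangle_zero (j : Fin b) :
    pairRectangle b σ 0 j = if σ j then b + j + 1 else b - j := rfl

@[simp]
theorem pairRectangle_one (j : Fin b) :
    pairRectangle b σ 1 j = if σ j then b - j else b + j + 1 := rfl

theorem pairRectangle_mem_Icc (i : Fin 2) (j : Fin b) : pairRectangle b σ i j ∈ Icc 1 (2 * b) := by
  have := j.isLt
  rw [mem_Icc]
  fin_cases i <;> simp only [Fin.zero_eta, Fin.mk_one, pairRectangle_zero, pairRectangle_one] <;>
    split_ifs <;> omega

theorem pairRectangle_injective :
    Function.Injective (fun p : Fin 2 × Fin b => pairRectangle b σ p.1 p.2) := by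
  rintro ⟨i, j⟩ ⟨i', j'⟩ h
  have := j.isLt
  have := j'.isLt
  obtain rfl : j = j' := by
    apply Fin.ext
    fin_cases i <;> fin_cases i' <;>
      simp only [Fin.zero_eta, Fin.mk_one, pairRectangle_zero, pairRectangle_one] at h <;>
      split_ifs at h <;> omega
  refine Prod.ext ?_ rfl
  fin_cases i <;> fin_cases i' <;>
    simp only [Fin.zero_eta, Fin.mk_one, pairRectangle_zero, pairRectangle_one] at h ⊢ <;>
    split_ifs at h <;> omega

theorem pairRectangle_col_sum (j : Fin b) : ∑ i, pairRectangle b σ i j = 2 * b + 1 := by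
  have := j.isLt
  rw [Fin.sum_univ_two, pairRectangle_zero, pairRectangle_one]
  split_ifs <;> omega

theorem pairRectangle_row_sum_sub :
    ((∑ j, pairRectangle b σ 0 j : ℕ) : ℤ) - (∑ j, pairRectangle b σ 1 j : ℕ)
      = ∑ k ∈ range b, (if σ k then 1 else -1 : ℤ) * (2 * k + 1) := by
  push_cast
  rw [← sum_sub_distrib, ← Fin.sum_univ_eq_sum_range]
  refine sum_congr rfl fun j _ => ?_
  rw [pairRectangle_zero, pairRectangle_one]
  split_ifs <;> push_cast [Nat.cast_sub j.is_le'] <;> ring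

end PairRectangle

theorem stmt_3_general (b : ℕ) (hodd : Odd b) :
    ∃ f : Fin 2 → Fin b → ℕ,
      (∀ i j, f i j ∈ Finset.Icc 1 (2 * b)) ∧
      Function.Injective (fun p : Fin 2 × Fin b => f p.1 p.2) ∧
      (∃ c, ∀ j, ∑ i, f i j = c) ∧
      ((∑ j, f 0 j) = (∑ j, f 1 j) + 1 ∨ (∑ j, f 1 j) = (∑ j, f 0 j) + 1) := by
  obtain ⟨m, rfl⟩ := hodd
  obtain ⟨σ, hσ⟩ := exists_signs_sum_odd_eq_one m
  refine ⟨pairRectangle _ σ, pairRectangle_mem_Icc _ σ, pairRectangle_injective _ σ,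
    ⟨_, pairRectangle_col_sum _ σ⟩, Or.inl ?_⟩
  have := pairRectangle_row_sum_sub (2 * m + 1) σ
  rw [hσ] at this
  omega

/-- For every odd `b ≥ 3` there exists a `2 × b` nearly magic rectangle: entries exactly
`1,…,2b`, all column sums equal, and the two row sums differing by exactly 1. -/
theorem stmt_3 (b : ℕ) (hb : 3 ≤ b) (hodd : Odd b) :
    ∃ f : Fin 2 → Fin b → ℕ,
      (∀ i j, f i j ∈ Finset.Icc 1 (2 * b)) ∧
      Function.Injective (fun p : Fin 2 × Fin b => f p.1 p.2) ∧
      (∃ c, ∀ j, ∑ i, f i j = c) ∧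
      ((∑ j, f 0 j) = (∑ j, f 1 j) + 1 ∨ (∑ j, f 1 j) = (∑ j, f 0 j) + 1) :=
  stmt_3_general b hodd
end

section
/- Let m be even, m ≥ 4, and r ≥ 1. Suppose there exist an MRS(m,2;r) (r arrays of size m×2 on {1,…,2rm} with all row sums 2rm+1 and all column sums m(2rm+1)/2) and an MRS(m,m−2;r). If each entry of the MRS(m,m−2;r) is increased by 2rm and the i-th arrays are glued side by side, the resulting r arrays of size m×m have entries exactly {1,…,rm²}, all row sums equal to m(rm²+1)/2, and column sums taking exactly the two values m(2rm+1)/2 and m(rm(m−2)+1)/2+2rm². -/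
/-! The shift by `2rm` lifts the entries of the `m × (m-2)` arrays above all entries of the
`m × 2` arrays, so the glued entries are distinct and fill `{1,…,rm²}`; every row and column
sum of a glued array is computed blockwise from those of its two pieces. -/

open Finset

def glueCols {p n a : ℕ} (A : Fin p → Fin a → ℕ) (B : Fin p → Fin (n - a) → ℕ)
    (c : ℕ) : Fin p → Fin n → ℕ :=
  fun i j => if hj : j.val < a then A i ⟨j, hj⟩ else B i ⟨j - a, by omega⟩ + c

section GlueCols

variable {p n a : ℕ} {A : Fin p → Fin a → ℕ} {B : Fin p → Fin (n - a) → ℕ} {c : ℕ}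

theorem glueCols_of_lt {i : Fin p} {j : Fin n} (hj : j.val < a) :
    glueCols A B c i j = A i ⟨j, hj⟩ :=
  dif_pos hj

theorem glueCols_of_not_lt {i : Fin p} {j : Fin n} (hj : ¬ j.val < a) :
    glueCols A B c i j = B i ⟨j - a, by omega⟩ + c :=
  dif_neg hj

theorem glueCols_mem_Icc {M : ℕ} (hA : ∀ i j, A i j ∈ Icc 1 c)
    (hB : ∀ i j, B i j ∈ Icc 1 M) (i : Fin p) (j : Fin n) :
    glueCols A B c i j ∈ Icc 1 (c + M) := by
  by_cases hj : j.val < a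
  · rw [glueCols_of_lt hj]
    exact Icc_subset_Icc_right (Nat.le_add_right c M) (hA i _)
  · have := mem_Icc.1 (hB i ⟨j - a, by omega⟩)
    rw [glueCols_of_not_lt hj, mem_Icc]
    omega

theorem sum_glueCols_row (ha : a ≤ n) (i : Fin p) :
    ∑ j, glueCols A B c i j = ∑ j, A i j + (∑ j, B i j + (n - a) * c) := by
  obtain ⟨k, rfl⟩ := Nat.exists_eq_add_of_le ha
  rw [Fin.sum_univ_add]
  congr 1
  · exact sum_congr rfl fun j _ => glueCols_of_lt (j := Fin.castAdd k j) j.isLt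
  · have hk : k = a + k - a := (Nat.add_sub_cancel_left a k).symm
    calc ∑ j : Fin k, glueCols A B c i (Fin.natAdd a j)
          = ∑ j : Fin k, (B i (Fin.cast hk j) + c) :=
          sum_congr rfl fun j _ => by
            rw [glueCols_of_not_lt (j := Fin.natAdd a j) (by simp)]
            congr 2
            ext
            simp
      _ = ∑ j, B i j + (a + k - a) * c := by
          rw [sum_add_distrib, Fin.sum_congr', sum_const, card_univ, Fintype.card_fin, smul_eq_mul]
          simp only [Nat.add_sub_cancel_left]

theorem sum_glueCols_col_of_lt {j : Fin n} (hj : j.val < a) :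
    ∑ i, glueCols A B c i j = ∑ i, A i ⟨j, hj⟩ :=
  sum_congr rfl fun _ _ => glueCols_of_lt hj

theorem sum_glueCols_col_of_not_lt {j : Fin n} (hj : ¬ j.val < a) :
    ∑ i, glueCols A B c i j = ∑ i, B i ⟨j - a, by omega⟩ + p * c := by
  simp [glueCols_of_not_lt hj, sum_add_distrib]

theorem injective_glueCols {τ : Type*} {A : τ → Fin p → Fin a → ℕ}
    {B : τ → Fin p → Fin (n - a) → ℕ}
    (hA : Function.Injective fun x : τ × Fin p × Fin a => A x.1 x.2.1 x.2.2)
    (hB : Function.Injective fun x : τ × Fin p × Fin (n - a) => B x.1 x.2.1 x.2.2)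
    (hAc : ∀ t i j, A t i j ≤ c) (hBpos : ∀ t i j, 0 < B t i j) :
    Function.Injective fun x : τ × Fin p × Fin n => glueCols (A x.1) (B x.1) c x.2.1 x.2.2 := by
  rintro ⟨t₁, i₁, j₁⟩ ⟨t₂, i₂, j₂⟩ heq
  dsimp only at heq
  by_cases h₁ : j₁.val < a <;> by_cases h₂ : j₂.val < a
  · rw [glueCols_of_lt h₁, glueCols_of_lt h₂] at heq
    have := @hA (t₁, i₁, ⟨j₁, h₁⟩) (t₂, i₂, ⟨j₂, h₂⟩) heq
    simp_all [Fin.ext_iff]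
  · have := hAc t₁ i₁ ⟨j₁, h₁⟩
    have := hBpos t₂ i₂ ⟨j₂ - a, by omega⟩
    rw [glueCols_of_lt h₁, glueCols_of_not_lt h₂] at heq
    omega
  · have := hBpos t₁ i₁ ⟨j₁ - a, by omega⟩
    have := hAc t₂ i₂ ⟨j₂, h₂⟩
    rw [glueCols_of_not_lt h₁, glueCols_of_lt h₂] at heq
    omega
  · rw [glueCols_of_not_lt h₁, glueCols_of_not_lt h₂, add_left_inj] at heq
    have := @hB (t₁, i₁, ⟨j₁ - a, by omega⟩) (t₂, i₂, ⟨j₂ - a, by omega⟩) heq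
    simp only [Prod.mk.injEq, Fin.mk.injEq] at this
    obtain ⟨rfl, rfl, hj⟩ := this
    simp only [Prod.mk.injEq, true_and]
    omega

end GlueCols

/-- Gluing an `MRS(m,2;r)` with an `MRS(m,m-2;r)` shifted up by `2rm` gives `r` arrays of
size `m × m` with entries exactly `{1,…,rm²}`, all row sums `m(rm²+1)/2`, and column sums
taking exactly the two values `m(2rm+1)/2` and `m(rm(m-2)+1)/2 + 2rm²`. -/
theorem stmt_10 (m r : ℕ) (hm4 : 4 ≤ m) (hr : 1 ≤ r)
    (f : Fin r → Fin m → Fin 2 → ℕ)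
    (hf1 : ∀ t i j, f t i j ∈ Finset.Icc 1 (2 * r * m))
    (hf2 : Function.Injective fun p : Fin r × Fin m × Fin 2 => f p.1 p.2.1 p.2.2)
    (hf3 : ∀ t i, ∑ j, f t i j = 2 * r * m + 1)
    (hf4 : ∀ t j, 2 * ∑ i, f t i j = m * (2 * r * m + 1))
    (g : Fin r → Fin m → Fin (m - 2) → ℕ)
    (hg1 : ∀ t i j, g t i j ∈ Finset.Icc 1 (m * (m - 2) * r))
    (hg2 : Function.Injective fun p : Fin r × Fin m × Fin (m - 2) => g p.1 p.2.1 p.2.2)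
    (hg3 : ∀ t i, 2 * ∑ j, g t i j = (m - 2) * (m * (m - 2) * r + 1))
    (hg4 : ∀ t j, 2 * ∑ i, g t i j = m * (m * (m - 2) * r + 1))
    (h : Fin r → Fin m → Fin m → ℕ)
    (hh : h = fun t i j =>
      if hj : j.val < 2 then f t i ⟨j.val, hj⟩
      else g t i ⟨j.val - 2, by have := j.isLt; omega⟩ + 2 * r * m) :
    (∀ t i j, h t i j ∈ Finset.Icc 1 (r * m ^ 2)) ∧
    Function.Injective (fun p : Fin r × Fin m × Fin m => h p.1 p.2.1 p.2.2) ∧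
    (∀ t i, 2 * ∑ j, h t i j = m * (r * m ^ 2 + 1)) ∧
    (∀ t j, 2 * ∑ i, h t i j = m * (2 * r * m + 1) ∨
            2 * ∑ i, h t i j = m * (m * (m - 2) * r + 1) + 4 * r * m ^ 2) ∧
    (∃ t j, 2 * ∑ i, h t i j = m * (2 * r * m + 1)) ∧
    (∃ t j, 2 * ∑ i, h t i j = m * (m * (m - 2) * r + 1) + 4 * r * m ^ 2) := by
  obtain rfl : h = fun t => glueCols (f t) (g t) (2 * r * m) := hh
  obtain ⟨k, rfl⟩ : ∃ k, m = k + 2 := ⟨m - 2, by omega⟩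
  have col_left (t) (j : Fin (k + 2)) (hj : j.val < 2) :
      2 * ∑ i, glueCols (f t) (g t) (2 * r * (k + 2)) i j = (k + 2) * (2 * r * (k + 2) + 1) := by
    rw [sum_glueCols_col_of_lt hj]
    exact hf4 t _
  have col_right (t) (j : Fin (k + 2)) (hj : ¬ j.val < 2) :
      2 * ∑ i, glueCols (f t) (g t) (2 * r * (k + 2)) i j =
        (k + 2) * ((k + 2) * (k + 2 - 2) * r + 1) + 4 * r * (k + 2) ^ 2 := by
    rw [sum_glueCols_col_of_not_lt hj, mul_add, hg4]
    ring
  refine ⟨fun t i j => ?_, injective_glueCols hf2 hg2 (fun t i j => (mem_Icc.1 (hf1 t i j)).2)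
    (fun t i j => (mem_Icc.1 (hg1 t i j)).1), fun t i => ?_, fun t j => ?_,
    ⟨⟨0, by omega⟩, 0, col_left _ _ (by simp)⟩,
    ⟨⟨0, by omega⟩, ⟨2, by omega⟩, col_right _ _ (lt_irrefl 2)⟩⟩
  · convert glueCols_mem_Icc (hf1 t) (hg1 t) i j using 2
    simp only [Nat.add_sub_cancel]
    ring
  · have := hg3 t i
    rw [sum_glueCols_row (by omega), hf3]
    simp only [Nat.add_sub_cancel] at this ⊢
    linarith
  · by_cases hj : j.val < 2
    · exact Or.inl (col_left t j hj)
    · exact Or.inr (col_right t j hj)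
end

section
/- Let m be odd, r odd, W an m×m matrix with entries of the form r(m*_{ij}−1) where (m*_{ij}) is a fixed m×m array with entries {1,…,m²}, and let U^1,…,U^r be m×m matrices built from a Kotzig array KA(m,r) by taking the t-th column of the Kotzig array as the first column of U^t and completing cyclically (u^t_{i,j}=u^t_{i+1 mod m, j−1}). Then the matrices Z^t = U^t + W, t = 1,…,r, have entries which together are exactly the integers {1,…,rm²}, each appearing once. -/
/-!
An entry `Z^t_{ij} = u^t_{ij} + r (m*_{ij} - 1)` with `u^t_{ij} ∈ [1, r]` is the base-`r`
decomposition of a number in `[1, r m²]`, so two entries agree only if both their `m*`-parts and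
their `U`-parts agree. Equal `m*`-parts force the same position `(i, j)`, and at a fixed position
the values `u^t_{ij}`, `t = 1, …, r`, form one row of the Kotzig array, hence are distinct.
-/

open Finset

lemma add_mul_pred_mem_Icc {r n a s : ℕ} (ha : a ∈ Icc 1 r) (hs : s ∈ Icc 1 n) :
    a + r * (s - 1) ∈ Icc 1 (r * n) := by
  rw [mem_Icc] at ha hs ⊢
  have hle : r * (s - 1) ≤ r * (n - 1) := Nat.mul_le_mul_left r (by omega)
  have hsub : r * (n - 1) = r * n - r := by rw [Nat.mul_sub, Nat.mul_one]
  have hrn : r ≤ r * n := Nat.le_mul_of_pos_right r (by omega)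
  omega

lemma eq_and_eq_of_add_mul_eq {r a b x y : ℕ} (ha : a ∈ Icc 1 r) (hb : b ∈ Icc 1 r)
    (h : a + r * x = b + r * y) : a = b ∧ x = y := by
  rw [mem_Icc] at ha hb
  have hshift : (a - 1) + r * x = (b - 1) + r * y := by omega
  have hab : a - 1 = b - 1 := by
    have := congrArg (· % r) hshift
    simp only [Nat.add_mul_mod_self_left, Nat.mod_eq_of_lt (show a - 1 < r by omega),
      Nat.mod_eq_of_lt (show b - 1 < r by omega)] at this
    exact this
  refine ⟨by omega, Nat.eq_of_mul_eq_mul_left (by omega : 0 < r) ?_⟩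
  omega

theorem stmt_11_general (m r : ℕ)
    (mstar : Fin m → Fin m → ℕ)
    (h1 : ∀ i j, mstar i j ∈ Finset.Icc 1 (m ^ 2))
    (h2 : Function.Injective fun p : Fin m × Fin m => mstar p.1 p.2)
    (K : Fin m → Fin r → ℕ)
    (hK1 : ∀ i, Function.Injective (K i) ∧ ∀ t, K i t ∈ Finset.Icc 1 r)
    (Z : Fin r → Fin m → Fin m → ℕ)
    (hZ : Z = fun t i j =>
      K ⟨(i.val + j.val) % m, Nat.mod_lt _ i.pos⟩ t + r * (mstar i j - 1)) :
    (∀ t i j, Z t i j ∈ Finset.Icc 1 (r * m ^ 2)) ∧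
    Function.Injective (fun p : Fin r × Fin m × Fin m => Z p.1 p.2.1 p.2.2) := by
  subst hZ
  refine ⟨fun t i j => add_mul_pred_mem_Icc ((hK1 _).2 t) (h1 i j), ?_⟩
  rintro ⟨t, i, j⟩ ⟨t', i', j'⟩ h
  dsimp only at h
  obtain ⟨hK, hw⟩ := eq_and_eq_of_add_mul_eq ((hK1 _).2 t) ((hK1 _).2 t') h
  have hmstar : mstar i j = mstar i' j' := by
    have := mem_Icc.mp (h1 i j)
    have := mem_Icc.mp (h1 i' j')
    omega
  obtain ⟨rfl, rfl⟩ := Prod.ext_iff.mp (h2 (a₁ := (i, j)) (a₂ := (i', j')) hmstar)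
  rw [(hK1 _).1 hK]

/-- For `m, r` odd, the matrices `Z^t = U^t + W` built from a Kotzig array `KA(m,r)`
(cyclic completion of each column) and `W = r(m* - 1)` for a fixed array `m*` with entries
`{1,…,m²}` have entries which together are exactly `{1,…,rm²}`, each appearing once. -/
theorem stmt_11 (m r : ℕ) (hm : Odd m) (hr : Odd r)
    (mstar : Fin m → Fin m → ℕ)
    (h1 : ∀ i j, mstar i j ∈ Finset.Icc 1 (m ^ 2))
    (h2 : Function.Injective fun p : Fin m × Fin m => mstar p.1 p.2)
    (K : Fin m → Fin r → ℕ)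
    (hK1 : ∀ i, Function.Injective (K i) ∧ ∀ t, K i t ∈ Finset.Icc 1 r)
    (c : ℕ) (hK2 : ∀ t, ∑ i, K i t = c)
    (Z : Fin r → Fin m → Fin m → ℕ)
    (hZ : Z = fun t i j =>
      K ⟨(i.val + j.val) % m, Nat.mod_lt _ i.pos⟩ t + r * (mstar i j - 1)) :
    (∀ t i j, Z t i j ∈ Finset.Icc 1 (r * m ^ 2)) ∧
    Function.Injective (fun p : Fin r × Fin m × Fin m => Z p.1 p.2.1 p.2.2) :=
  stmt_11_general m r mstar h1 h2 K hK1 Z hZ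
end

section
/- In the matrix A of the previous construction (n ≥ 3 odd, s=(n+1)/2), after subtracting 1 from every entry, the k-th column sum equals (n+1)((n+2)+2(k−1)(n+1)−2)/2 for 1 ≤ k ≤ n+1; moreover for 2 ≤ j ≤ (n+1)/2, the sum of the j-th and the (n+3−j)-th column sums equals (n+1)(n²+3n+1), so that swapping (n+1)/2 suitably chosen entries between columns j and n+3−j makes both column sums equal to ((n+1)/2)(n²+3n+1). -/
/-!
Column `c` of `B` consists of the `2s` consecutive integers `2sc, …, 2sc + 2s - 1` (listed
downwards for even `c` and upwards for odd `c`), so its sum is `4s²c + s(2s - 1)`. Columns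
`j` and `n + 1 - j = 2s - j` have the same parity, hence in every row their entries differ by
the same amount `2s(2s - 2j)`; exchanging the entries in any `s` rows moves half of the total
difference `4s²(2s - 2j)` of the two column sums, which balances them.
-/

open Finset

/-- The `(i, c)` entry of `B`, written with the half-size `s` of the `2s × 2s` matrix. -/
def boustrophedon (s c i : ℕ) : ℕ :=
  (if c % 2 = 0 then 2 * s * c + i + 1 else 2 * s * (c + 1) - i) - 1

lemma boustrophedon_of_even {s c : ℕ} (hc : c % 2 = 0) (i : ℕ) :
    boustrophedon s c i = 2 * s * c + i := by
  simp [boustrophedon, hc]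

lemma boustrophedon_reflect_of_odd {s c i : ℕ} (hc : c % 2 = 1) (hi : i < 2 * s) :
    boustrophedon s c (2 * s - 1 - i) = 2 * s * c + i := by
  simp only [boustrophedon, hc, one_ne_zero, if_false]
  have : 2 * s * (c + 1) = 2 * s * c + 2 * s := by ring
  omega

lemma boustrophedon_add_mul_of_mod_two_eq {s c c' i : ℕ} (hcc' : c % 2 = c' % 2)
    (hi : i < 2 * s) :
    boustrophedon s c' i + 2 * s * c = boustrophedon s c i + 2 * s * c' := by
  have h : 2 * s * (c + 1) = 2 * s * c + 2 * s := by ring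
  have h' : 2 * s * (c' + 1) = 2 * s * c' + 2 * s := by ring
  unfold boustrophedon
  split_ifs <;> omega

lemma sum_range_two_mul_id_add (s : ℕ) : ∑ i ∈ range (2 * s), i + s = 2 * s * s := by
  induction s with
  | zero => simp
  | succ t ih =>
    rw [show 2 * (t + 1) = 2 * t + 1 + 1 by ring, sum_range_succ, sum_range_succ]
    linarith

lemma sum_range_boustrophedon (s c : ℕ) :
    ∑ i ∈ range (2 * s), boustrophedon s c i = ∑ i ∈ range (2 * s), (2 * s * c + i) := by
  rcases Nat.mod_two_eq_zero_or_one c with hc | hc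
  · exact sum_congr rfl fun i _ => boustrophedon_of_even hc i
  · rw [← sum_range_reflect]
    exact sum_congr rfl fun i hi => boustrophedon_reflect_of_odd hc (mem_range.mp hi)

lemma sum_boustrophedon_add {N s : ℕ} (hN : N = 2 * s) (c : ℕ) :
    ∑ i : Fin N, boustrophedon s c i + s = 2 * s * s * (2 * c + 1) := by
  subst hN
  rw [Fin.sum_univ_eq_sum_range (boustrophedon s c), sum_range_boustrophedon, sum_add_distrib,
    sum_const, card_range, smul_eq_mul, add_assoc, sum_range_two_mul_id_add]
  ring

lemma sum_boustrophedon_swap {N s c c' : ℕ} (hN : N = 2 * s) (hcc' : c % 2 = c' % 2)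
    (S : Finset (Fin N)) :
    ∑ i ∈ S, boustrophedon s c' i + ∑ i ∈ Sᶜ, boustrophedon s c i + #S * (2 * s * c)
      = ∑ i : Fin N, boustrophedon s c i + #S * (2 * s * c') := by
  have hS : ∑ i ∈ S, boustrophedon s c' i + #S * (2 * s * c)
      = ∑ i ∈ S, boustrophedon s c i + #S * (2 * s * c') := by
    simp only [← smul_eq_mul, ← sum_const, ← sum_add_distrib]
    exact sum_congr rfl fun i _ => boustrophedon_add_mul_of_mod_two_eq hcc' (hN ▸ i.isLt)
  rw [← sum_add_sum_compl S]
  linarith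

theorem stmt_13_general (n : ℕ) (hn : Odd n) (s : ℕ) (hs : s = (n + 1) / 2)
    (B : Fin (n + 1) → Fin (n + 1) → ℕ)
    (hB : B = fun i j =>
      (if j.val % 2 = 0 then 2 * s * j.val + i.val + 1 else 2 * s * (j.val + 1) - i.val) - 1) :
    (∀ k : Fin (n + 1), 2 * ∑ i, B i k = (n + 1) * ((n + 2) + 2 * k.val * (n + 1) - 2)) ∧
    (∀ j : Fin (n + 1), 1 ≤ j.val → j.val ≤ (n + 1) / 2 - 1 →
      ∀ hj' : n + 1 - j.val < n + 1,
        (∑ i, B i j) + (∑ i, B i ⟨n + 1 - j.val, hj'⟩) = (n + 1) * (n ^ 2 + 3 * n + 1) ∧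
        ∃ S : Finset (Fin (n + 1)), S.card = (n + 1) / 2 ∧
          (∑ i ∈ S, B i ⟨n + 1 - j.val, hj'⟩) + (∑ i ∈ Sᶜ, B i j)
            = ((n + 1) / 2) * (n ^ 2 + 3 * n + 1) ∧
          (∑ i ∈ S, B i j) + (∑ i ∈ Sᶜ, B i ⟨n + 1 - j.val, hj'⟩)
            = ((n + 1) / 2) * (n ^ 2 + 3 * n + 1)) := by
  obtain ⟨m, rfl⟩ := hn
  obtain rfl : s = m + 1 := by omega
  obtain rfl : B = fun i j : Fin _ => boustrophedon (m + 1) j i := hB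
  have hN : 2 * m + 1 + 1 = 2 * (m + 1) := by ring
  have hhalf : (2 * m + 1 + 1) / 2 = m + 1 := by omega
  refine ⟨fun k => ?_, fun j _ _ hj' => ?_⟩
  · have hk := sum_boustrophedon_add hN k
    rw [show 2 * m + 1 + 2 + 2 * k * (2 * m + 1 + 1) - 2
      = 2 * m + 1 + 2 * k * (2 * m + 1 + 1) by omega]
    nlinarith
  set j' : ℕ := 2 * m + 1 + 1 - j
  have hpar : (j : ℕ) % 2 = j' % 2 := by omega
  have hjj' : ((j : ℕ) : ℤ) + j' = 2 * m + 2 := by omega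
  have hj := sum_boustrophedon_add hN j
  have hj'' := sum_boustrophedon_add hN j'
  obtain ⟨S, -, hS⟩ := exists_subset_card_eq (s := (univ : Finset (Fin (2 * m + 1 + 1))))
    (n := m + 1) (by simp; omega)
  have hswap := sum_boustrophedon_swap hN hpar S
  have hswap' := sum_boustrophedon_swap hN hpar Sᶜ
  rw [hS] at hswap
  rw [compl_compl, card_compl, hS, Fintype.card_fin,
    show 2 * m + 1 + 1 - (m + 1) = m + 1 by omega] at hswap'
  refine ⟨?_, S, hS.trans hhalf.symm, ?_, ?_⟩ <;> rw [hhalf] at * <;> zify at *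
  · linear_combination hj + hj'' + 4 * (m + 1) ^ 2 * hjj'
  · linear_combination hswap + hj + 2 * (m + 1) ^ 2 * hjj'
  · linear_combination hswap' + hj + 2 * (m + 1) ^ 2 * hjj'

/-- After subtracting 1 from every entry of the matrix `A` of the previous construction,
the `k`-th column sum equals `(n+1)((n+2)+2(k-1)(n+1)-2)/2`; moreover for `2 ≤ j ≤ (n+1)/2`
the `j`-th and `(n+3-j)`-th column sums add to `(n+1)(n²+3n+1)`, and swapping `(n+1)/2`
suitably chosen entries between these two columns makes both column sums equal to
`((n+1)/2)(n²+3n+1)`.  (Indices of rows and columns below are 0-based.) -/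
theorem stmt_13 (n : ℕ) (hn : Odd n) (hn3 : 3 ≤ n) (s : ℕ) (hs : s = (n + 1) / 2)
    (B : Fin (n + 1) → Fin (n + 1) → ℕ)
    (hB : B = fun i j =>
      (if j.val % 2 = 0 then 2 * s * j.val + i.val + 1 else 2 * s * (j.val + 1) - i.val) - 1) :
    (∀ k : Fin (n + 1), 2 * ∑ i, B i k = (n + 1) * ((n + 2) + 2 * k.val * (n + 1) - 2)) ∧
    (∀ j : Fin (n + 1), 1 ≤ j.val → j.val ≤ (n + 1) / 2 - 1 →
      ∀ hj' : n + 1 - j.val < n + 1,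
        (∑ i, B i j) + (∑ i, B i ⟨n + 1 - j.val, hj'⟩) = (n + 1) * (n ^ 2 + 3 * n + 1) ∧
        ∃ S : Finset (Fin (n + 1)), S.card = (n + 1) / 2 ∧
          (∑ i ∈ S, B i ⟨n + 1 - j.val, hj'⟩) + (∑ i ∈ Sᶜ, B i j)
            = ((n + 1) / 2) * (n ^ 2 + 3 * n + 1) ∧
          (∑ i ∈ S, B i j) + (∑ i ∈ Sᶜ, B i ⟨n + 1 - j.val, hj'⟩)
            = ((n + 1) / 2) * (n ^ 2 + 3 * n + 1)) :=
  stmt_13_general n hn s hs B hB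
end

section
/- If the complete bipartite graph K_{m,n} (m,n ≥ 2) admits a local antimagic labeling inducing only 2 colors, then an m×n magic rectangle exists; consequently, if m and n have different parity, then χ_la(K_{m,n}) ≥ 3. -/
/-!
In a 2-colouring of `K_{m,n}` the two parts are the colour classes, so all row sums of the
label array equal some `ρ` and all column sums some `σ`: the array is a magic rectangle.
Counting the label sum `1 + ⋯ + mn` by rows and by columns gives `2ρ = n(mn + 1)` and
`2σ = m(mn + 1)`; if `m` and `n` have different parity then `mn + 1` and one of `m`, `n` are odd,
so one of these right-hand sides is odd.
-/

open Finset Function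

theorem Finset.sum_Icc_one_id_mul_two (N : ℕ) : (∑ k ∈ Icc 1 N, k) * 2 = N * (N + 1) := by
  have h := sum_range_id_mul_two (N + 1)
  rw [range_eq_Ico, sum_eq_sum_Ico_succ_bot (Nat.succ_pos N)] at h
  rw [← Ico_add_one_right_eq_Icc]
  simpa [mul_comm] using h

theorem exists_const_of_card_image_union_le_two {ι κ α : Type*} [Fintype ι] [Fintype κ]
    [Nonempty ι] [Nonempty κ] [DecidableEq α] (r : ι → α) (c : κ → α)
    (hne : ∀ i j, r i ≠ c j) (hcard : #(univ.image r ∪ univ.image c) ≤ 2) :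
    ∃ ρ σ, (∀ i, r i = ρ) ∧ ∀ j, c j = σ := by
  have hdisj : Disjoint (univ.image r) (univ.image c) := by
    simpa [disjoint_left, eq_comm] using hne
  rw [card_union_of_disjoint hdisj] at hcard
  have hr : #(univ.image r) ≤ 1 := by
    have := (univ_nonempty.image c).card_pos
    omega
  have hc : #(univ.image c) ≤ 1 := by
    have := (univ_nonempty.image r).card_pos
    omega
  obtain ⟨i₀⟩ := ‹Nonempty ι›
  obtain ⟨j₀⟩ := ‹Nonempty κ›
  exact ⟨r i₀, c j₀, fun i => card_le_one_iff.mp hr (by simp) (by simp),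
    fun j => card_le_one_iff.mp hc (by simp) (by simp)⟩

theorem sum_mul_two_of_injective_of_mem_Icc {ι : Type*} [Fintype ι] (f : ι → ℕ)
    (hinj : Injective f) (hmem : ∀ i, f i ∈ Icc 1 (Fintype.card ι)) :
    (∑ i, f i) * 2 = Fintype.card ι * (Fintype.card ι + 1) := by
  have himage : univ.image f = Icc 1 (Fintype.card ι) :=
    eq_of_subset_of_card_le (by simpa [subset_iff] using hmem)
      (by rw [Nat.card_Icc, card_image_of_injective _ hinj]; simp)
  rw [← sum_Icc_one_id_mul_two, ← himage, sum_image fun _ _ _ _ h => hinj h]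

theorem row_sum_mul_two_eq {ι κ : Type*} [Fintype ι] [Fintype κ] [Nonempty ι]
    (g : ι → κ → ℕ) (hinj : Injective (uncurry g))
    (hmem : ∀ i j, g i j ∈ Icc 1 (Fintype.card ι * Fintype.card κ)) {ρ : ℕ}
    (hρ : ∀ i, ∑ j, g i j = ρ) :
    ρ * 2 = Fintype.card κ * (Fintype.card ι * Fintype.card κ + 1) := by
  have htotal := sum_mul_two_of_injective_of_mem_Icc (uncurry g) hinj
    (fun p => Fintype.card_prod ι κ ▸ hmem p.1 p.2)
  rw [Fintype.sum_prod_type] at htotal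
  simp only [uncurry_apply_pair, hρ, sum_const, card_univ, smul_eq_mul,
    Fintype.card_prod] at htotal
  apply Nat.eq_of_mul_eq_mul_left (Fintype.card_pos (α := ι))
  linarith

theorem mod_two_eq_of_magic_rectangle {m n : ℕ} (hm : 0 < m) (hn : 0 < n)
    (g : Fin m → Fin n → ℕ) (hinj : Injective (uncurry g))
    (hmem : ∀ i j, g i j ∈ Icc 1 (m * n)) {ρ σ : ℕ}
    (hρ : ∀ i, ∑ j, g i j = ρ) (hσ : ∀ j, ∑ i, g i j = σ) :
    m % 2 = n % 2 := by
  have := Fin.pos_iff_nonempty.mp hm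
  have := Fin.pos_iff_nonempty.mp hn
  have hrow : ρ * 2 = n * (m * n + 1) := by
    simpa using row_sum_mul_two_eq g hinj (by simpa using hmem) hρ
  have hcol : σ * 2 = m * (m * n + 1) := by
    have hinj' : Injective (uncurry fun j i => g i j) := hinj.comp Prod.swap_injective
    simpa [mul_comm n m] using
      row_sum_mul_two_eq (fun j i => g i j) hinj' (fun j i => by simpa [mul_comm] using hmem i j) hσ
  have hn_even : Even (n * (m * n + 1)) := ⟨ρ, by omega⟩
  have hm_even : Even (m * (m * n + 1)) := ⟨σ, by omega⟩
  simp only [Nat.even_mul, Nat.even_add_one] at hn_even hm_even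
  simp only [Nat.even_iff] at hn_even hm_even
  omega

/-- Edges of `K_{m,n}` are indexed by `Fin m × Fin n`: the weight of the `i`-th vertex of the
`m`-part is the `i`-th row sum and that of the `j`-th vertex of the `n`-part the `j`-th column
sum. -/
theorem stmt_14 (m n : ℕ) (hm : 2 ≤ m) (hn : 2 ≤ n) :
    (∀ f : Fin m → Fin n → ℕ,
      (∀ i j, f i j ∈ Finset.Icc 1 (m * n)) →
      Function.Injective (fun p : Fin m × Fin n => f p.1 p.2) →
      (∀ i j, (∑ j', f i j') ≠ (∑ i', f i' j)) →
      ((Finset.image (fun i => ∑ j', f i j') Finset.univ ∪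
        Finset.image (fun j => ∑ i', f i' j) Finset.univ).card = 2) →
      ∃ (g : Fin m → Fin n → ℕ) (ρ σ : ℕ),
        (∀ i j, g i j ∈ Finset.Icc 1 (m * n)) ∧
        Function.Injective (fun p : Fin m × Fin n => g p.1 p.2) ∧
        (∀ i, ∑ j, g i j = ρ) ∧ (∀ j, ∑ i, g i j = σ)) ∧
    (m % 2 ≠ n % 2 →
      ∀ f : Fin m → Fin n → ℕ,
        (∀ i j, f i j ∈ Finset.Icc 1 (m * n)) →
        Function.Injective (fun p : Fin m × Fin n => f p.1 p.2) →
        (∀ i j, (∑ j', f i j') ≠ (∑ i', f i' j)) →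
        3 ≤ (Finset.image (fun i => ∑ j', f i j') Finset.univ ∪
             Finset.image (fun j => ∑ i', f i' j) Finset.univ).card) := by
  have := Fin.pos_iff_nonempty.mp (by omega : 0 < m)
  have := Fin.pos_iff_nonempty.mp (by omega : 0 < n)
  refine ⟨fun f hmem hinj hne hcard => ?_, fun hpar f hmem hinj hne => ?_⟩
  · obtain ⟨ρ, σ, hρ, hσ⟩ := exists_const_of_card_image_union_le_two _ _ hne hcard.le
    exact ⟨f, ρ, σ, hmem, hinj, hρ, hσ⟩
  · by_contra! hlt
    obtain ⟨ρ, σ, hρ, hσ⟩ := exists_const_of_card_image_union_le_two _ _ hne (by omega)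
    exact hpar (mod_two_eq_of_magic_rectangle (by omega) (by omega) f hinj hmem hρ hσ)
end

section
/- Let m ≥ 4 be even and n ≥ 3 odd with m ≢ n (mod 2). Given an m×n nearly magic rectangle (entries exactly {1,…,mn}, constant column sums m(mn+1)/2, row sums taking the two values (n(mn+1)±1)/2), labeling the edges of K_{m,n} so that the edges at the i-th vertex of the m-part receive the i-th row yields a local antimagic labeling of K_{m,n} with exactly 3 distinct vertex weights; hence χ_la(K_{m,n}) = 3. -/
/-!
Put `K = mn + 1`. Summing the nearly magic rectangle by columns, its row sums total `n · mK/2`,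
so both row values `(nK ± 1)/2` must occur; and a row value never equals the column value `mK/2`,
since `(m - n) K = ±1` is impossible for `K ≥ 2`. Conversely, the row sums of any labeling by
`1, …, mn` total `mn(mn+1)/2`, so a common row sum `s` would satisfy `2s = n(mn+1)`, which is odd
when `m` is even and `n` odd. Hence a local antimagic labeling needs at least two row weights
besides the column weights.
-/

open Finset

lemma two_mul_sum_Icc_one_id (N : ℕ) : 2 * ∑ x ∈ Icc 1 N, x = N * (N + 1) := by
  have h : ∑ x ∈ Icc 1 N, x = ∑ x ∈ range (N + 1), x := by
    rw [range_eq_Ico, sum_eq_sum_Ico_succ_bot (by omega), zero_add]; rfl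
  rw [h, mul_comm, sum_range_id_mul_two, add_tsub_cancel_right, mul_comm]

lemma two_mul_sum_eq_of_injective_mem_Icc {α : Type*} [Fintype α] {N : ℕ} {φ : α → ℕ}
    (hφ : ∀ a, φ a ∈ Icc 1 N) (hinj : Function.Injective φ) (hcard : Fintype.card α = N) :
    2 * ∑ a, φ a = N * (N + 1) := by
  have himage : univ.image φ = Icc 1 N :=
    eq_of_subset_of_card_le (fun x hx => by obtain ⟨a, -, rfl⟩ := mem_image.mp hx; exact hφ a)
      (by rw [card_image_of_injective _ hinj, Nat.card_Icc, card_univ, hcard,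
        add_tsub_cancel_right])
  rw [← two_mul_sum_Icc_one_id, ← himage, sum_image fun a _ b _ h => hinj h]

lemma mul_ne_mul_add_one {a b c : ℕ} (hc : 2 ≤ c) : a * c ≠ b * c + 1 := by
  intro h
  have hdvd : c ∣ 1 := (Nat.dvd_add_right (dvd_mul_left c b)).mp (h ▸ dvd_mul_left c a)
  exact absurd (Nat.le_of_dvd one_pos hdvd) (by omega)

section Rectangle

variable {m n : ℕ}

/-- The weights of the vertices `v_i` of `K_{m,n}` under the edge labeling `v_i u_j ↦ f i j`;
`colSums f` are those of the vertices `u_j`. -/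
def rowSums (f : Fin m → Fin n → ℕ) : Finset ℕ := univ.image fun i => ∑ j, f i j

def colSums (f : Fin m → Fin n → ℕ) : Finset ℕ := univ.image fun j => ∑ i, f i j

lemma card_rowSums_union_colSums {f : Fin m → Fin n → ℕ}
    (hf : ∀ i j, ∑ j', f i j' ≠ ∑ i', f i' j) :
    (rowSums f ∪ colSums f).card = (rowSums f).card + (colSums f).card := by
  refine card_union_of_disjoint (disjoint_left.mpr fun x hrow hcol => ?_)
  obtain ⟨i, -, rfl⟩ := mem_image.mp hrow
  obtain ⟨j, -, hj⟩ := mem_image.mp hcol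
  exact hf i j hj.symm

lemma two_mul_sum_sum_eq_of_injective_mem_Icc {f : Fin m → Fin n → ℕ}
    (hf : ∀ i j, f i j ∈ Icc 1 (m * n))
    (hinj : Function.Injective fun p : Fin m × Fin n => f p.1 p.2) :
    2 * ∑ i, ∑ j, f i j = m * n * (m * n + 1) := by
  rw [← Fintype.sum_prod_type']
  exact two_mul_sum_eq_of_injective_mem_Icc (fun p => hf p.1 p.2) hinj (by simp)

lemma two_le_card_rowSums (hm : Even m) (hm0 : 0 < m) (hn : Odd n) {f : Fin m → Fin n → ℕ}
    (hf : ∀ i j, f i j ∈ Icc 1 (m * n))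
    (hinj : Function.Injective fun p : Fin m × Fin n => f p.1 p.2) :
    2 ≤ (rowSums f).card := by
  by_contra! hlt
  set i₀ : Fin m := ⟨0, hm0⟩
  have hconst : ∀ i, ∑ j, f i j = ∑ j, f i₀ j := fun i =>
    card_le_one.mp (show (rowSums f).card ≤ 1 by omega) _ (mem_image_of_mem _ (mem_univ i)) _
      (mem_image_of_mem _ (mem_univ i₀))
  have htotal := two_mul_sum_sum_eq_of_injective_mem_Icc hf hinj
  simp only [hconst, sum_const, card_univ, Fintype.card_fin, smul_eq_mul] at htotal
  have hrow : 2 * ∑ j, f i₀ j = n * (m * n + 1) :=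
    Nat.eq_of_mul_eq_mul_left hm0 (by linarith)
  have hodd : Odd (n * (m * n + 1)) := hn.mul (hm.mul_right n).add_one
  exact Nat.not_even_iff_odd.mpr hodd (hrow ▸ even_two_mul _)

lemma three_le_card_rowSums_union_colSums (hm : Even m) (hm0 : 0 < m) (hn : Odd n)
    {f : Fin m → Fin n → ℕ} (hf : ∀ i j, f i j ∈ Icc 1 (m * n))
    (hinj : Function.Injective fun p : Fin m × Fin n => f p.1 p.2)
    (hne : ∀ i j, ∑ j', f i j' ≠ ∑ i', f i' j) :
    3 ≤ (rowSums f ∪ colSums f).card := by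
  have hcol : 0 < (colSums f).card :=
    ((univ_nonempty_iff.mpr ⟨⟨0, hn.pos⟩⟩).image _).card_pos
  have := two_le_card_rowSums hm hm0 hn hf hinj
  rw [card_rowSums_union_colSums hne]
  omega

variable {f : Fin m → Fin n → ℕ} {c : ℕ}

lemma rowSum_ne_colSum {i : Fin m} {j : Fin n} (hc : 2 ≤ c)
    (hcol : 2 * ∑ i', f i' j = m * c)
    (hrow : 2 * ∑ j', f i j' = n * c - 1 ∨ 2 * ∑ j', f i j' = n * c + 1) :
    ∑ j', f i j' ≠ ∑ i', f i' j := by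
  intro h
  have hmc : m * c ≠ n * c + 1 := mul_ne_mul_add_one hc
  have hnc : n * c ≠ m * c + 1 := mul_ne_mul_add_one hc
  have : 0 < m * c := Nat.mul_pos i.pos (by omega)
  omega

lemma eq_mul_of_two_mul_rowSum_eq (hm0 : 0 < m) {a : ℕ} (hcol : ∀ j, 2 * ∑ i, f i j = m * c)
    (hrow : ∀ i, 2 * ∑ j, f i j = a) : a = n * c := by
  refine Nat.eq_of_mul_eq_mul_left hm0 ?_
  calc m * a = ∑ i, 2 * ∑ j, f i j := by simp [hrow]
    _ = ∑ j, 2 * ∑ i, f i j := by simp only [← mul_sum]; rw [sum_comm]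
    _ = m * (n * c) := by simp [hcol]; ring

lemma card_rowSums_eq_two (hm0 : 0 < m) (hnc : 0 < n * c) (hcol : ∀ j, 2 * ∑ i, f i j = m * c)
    (hrow : ∀ i, 2 * ∑ j, f i j = n * c - 1 ∨ 2 * ∑ j, f i j = n * c + 1) :
    (rowSums f).card = 2 := by
  obtain ⟨i₁, h₁⟩ : ∃ i, 2 * ∑ j, f i j = n * c - 1 := by
    by_contra! h
    have := eq_mul_of_two_mul_rowSum_eq hm0 hcol fun i => (hrow i).resolve_left (h i)
    omega
  obtain ⟨i₂, h₂⟩ : ∃ i, 2 * ∑ j, f i j = n * c + 1 := by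
    by_contra! h
    have := eq_mul_of_two_mul_rowSum_eq hm0 hcol fun i => (hrow i).resolve_right (h i)
    omega
  refine card_eq_two.mpr ⟨∑ j, f i₁ j, ∑ j, f i₂ j, by omega, ?_⟩
  ext x
  simp only [rowSums, mem_image, mem_univ, true_and, mem_insert, mem_singleton]
  constructor
  · rintro ⟨i, rfl⟩
    rcases hrow i with h | h <;> omega
  · rintro (rfl | rfl)
    exacts [⟨i₁, rfl⟩, ⟨i₂, rfl⟩]

lemma card_colSums_eq_one (hn0 : 0 < n) {b : ℕ} (hcol : ∀ j, 2 * ∑ i, f i j = b) :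
    (colSums f).card = 1 := by
  set j₀ : Fin n := ⟨0, hn0⟩
  have hconst : colSums f = univ.image fun _ => ∑ i, f i j₀ :=
    image_congr fun j _ => by have := hcol j; have := hcol j₀; omega
  rw [hconst, image_const ⟨j₀, mem_univ _⟩, card_singleton]

end Rectangle

theorem stmt_15_general (m n : ℕ) (hm : Even m) (hm4 : 4 ≤ m) (hn : Odd n)
    (g : Fin m → Fin n → ℕ)
    (h3 : ∀ j, 2 * ∑ i, g i j = m * (m * n + 1))
    (h4 : ∀ i, 2 * ∑ j, g i j = n * (m * n + 1) - 1 ∨ 2 * ∑ j, g i j = n * (m * n + 1) + 1) :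
    ((∀ i j, (∑ j', g i j') ≠ (∑ i', g i' j)) ∧
      (Finset.image (fun i => ∑ j', g i j') Finset.univ ∪
       Finset.image (fun j => ∑ i', g i' j) Finset.univ).card = 3) ∧
    (∀ f : Fin m → Fin n → ℕ,
      (∀ i j, f i j ∈ Finset.Icc 1 (m * n)) →
      Function.Injective (fun p : Fin m × Fin n => f p.1 p.2) →
      (∀ i j, (∑ j', f i j') ≠ (∑ i', f i' j)) →
      3 ≤ (Finset.image (fun i => ∑ j', f i j') Finset.univ ∪
           Finset.image (fun j => ∑ i', f i' j) Finset.univ).card) := by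
  have hm0 : 0 < m := by omega
  have hn0 : 0 < n := hn.pos
  have hmn : 0 < m * n := Nat.mul_pos hm0 hn0
  have hne : ∀ i j, ∑ j', g i j' ≠ ∑ i', g i' j :=
    fun i j => rowSum_ne_colSum (by omega) (h3 j) (h4 i)
  refine ⟨⟨hne, ?_⟩, fun f hf hinj hfne =>
    three_le_card_rowSums_union_colSums hm hm0 hn hf hinj hfne⟩
  change (rowSums g ∪ colSums g).card = 3
  rw [card_rowSums_union_colSums hne, card_rowSums_eq_two hm0 (Nat.mul_pos hn0 (by omega)) h3 h4,
    card_colSums_eq_one hn0 h3]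

/-- For `m ≥ 4` even and `n ≥ 3` odd, labeling `K_{m,n}` by an `m × n` nearly magic
rectangle gives a local antimagic labeling with exactly 3 distinct vertex weights; hence
`χ_la(K_{m,n}) = 3`. -/
theorem stmt_15 (m n : ℕ) (hm : Even m) (hm4 : 4 ≤ m) (hn : Odd n) (hn3 : 3 ≤ n)
    (g : Fin m → Fin n → ℕ)
    (h1 : ∀ i j, g i j ∈ Finset.Icc 1 (m * n))
    (h2 : Function.Injective fun p : Fin m × Fin n => g p.1 p.2)
    (h3 : ∀ j, 2 * ∑ i, g i j = m * (m * n + 1))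
    (h4 : ∀ i, 2 * ∑ j, g i j = n * (m * n + 1) - 1 ∨ 2 * ∑ j, g i j = n * (m * n + 1) + 1) :
    ((∀ i j, (∑ j', g i j') ≠ (∑ i', g i' j)) ∧
      (Finset.image (fun i => ∑ j', g i j') Finset.univ ∪
       Finset.image (fun j => ∑ i', g i' j) Finset.univ).card = 3) ∧
    (∀ f : Fin m → Fin n → ℕ,
      (∀ i j, f i j ∈ Finset.Icc 1 (m * n)) →
      Function.Injective (fun p : Fin m × Fin n => f p.1 p.2) →
      (∀ i j, (∑ j', f i j') ≠ (∑ i', f i' j)) →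
      3 ≤ (Finset.image (fun i => ∑ j', f i j') Finset.univ ∪
           Finset.image (fun j => ∑ i', f i' j) Finset.univ).card) :=
  stmt_15_general m n hm hm4 hn g h3 h4
end
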